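/- arXiv:1711.08013 — 2 statements merged into one kernel-verified Lean document; each statement's English description precedes it below -/
import Mathlib

section
/- Let P be an n×n positive semidefinite real matrix, A an m×n real matrix, and σ > 0, ρ > 0 real parameters. Then the (n+m)×(n+m) block matrix K = [[P + σI, Aᵀ], [A, −ρ⁻¹I]] is invertible. -/
/-!
The Schur complement of the positive definite block `P + σ I` in `K` is
`-(ρ⁻¹ I + A (P + σ I)⁻¹ Aᵀ)`, the negative of a positive definite matrix, so it is invertible,
and hence so is `K`.
-/

open Matrix

theorem Matrix.isUnit_fromBlocks_of_posDef_of_posDef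
    {K m n : Type*} [Field K] [PartialOrder K] [StarRing K] [StarOrderedRing K]
    [Fintype m] [Fintype n] [DecidableEq m] [DecidableEq n]
    {H : Matrix n n K} {C : Matrix m m K} (hH : H.PosDef) (hC : C.PosDef) (B : Matrix m n K) :
    IsUnit (fromBlocks H Bᴴ B (-C)) := by
  have := hH.isUnit.invertible
  have hSchur : (C + B * H⁻¹ * Bᴴ).PosDef :=
    hC.add_posSemidef (hH.inv.posSemidef.mul_mul_conjTranspose_same B)
  rw [isUnit_fromBlocks_iff_of_invertible₁₁, invOf_eq_nonsing_inv, ← neg_add']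
  exact hSchur.isUnit.neg

theorem stmt_0 (n m : ℕ) (P : Matrix (Fin n) (Fin n) ℝ) (A : Matrix (Fin m) (Fin n) ℝ)
    (σ ρ : ℝ) (hP : P.PosSemidef) (hσ : 0 < σ) (hρ : 0 < ρ) :
    IsUnit (Matrix.fromBlocks (P + σ • (1 : Matrix (Fin n) (Fin n) ℝ)) Aᵀ A
      (-(ρ⁻¹ • (1 : Matrix (Fin m) (Fin m) ℝ)))) := by
  rw [← conjTranspose_eq_transpose_of_trivial]
  exact isUnit_fromBlocks_of_posDef_of_posDef (PosDef.posSemidef_add hP (PosDef.one.smul hσ))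
    (PosDef.one.smul (inv_pos.mpr hρ)) A
end

section
/- For the Huber penalty φ(u) = u² if |u| ≤ M and M(2|u| − M) if |u| > M, one has for every u ∈ ℝ: φ(u) = min over (v, r, s) ∈ ℝ × ℝ≥0 × ℝ≥0 with u = v + r − s of v² + 2M(r + s). That is, the Huber function equals the optimal value of this constrained minimization. -/
/-!
The Huber function is the infimal convolution of `v ↦ v ^ 2` and `w ↦ 2 M |w|`: for every `v`,
`huber M u ≤ v ^ 2 + 2 M |u - v|`, with equality at the projection of `u` onto `[-M, M]`.
In the constrained problem, `|u - v| = |r - s| ≤ r + s`, with equality when `r` and `s` are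
the positive and negative parts of `u - v`.
-/

noncomputable section

def huber (M u : ℝ) : ℝ := if |u| ≤ M then u ^ 2 else M * (2 * |u| - M)

variable {M : ℝ}

theorem huber_le_sq_add (hM : 0 ≤ M) (u v : ℝ) : huber M u ≤ v ^ 2 + 2 * M * |u - v| := by
  unfold huber
  split_ifs with hu
  · -- `u ^ 2 - v ^ 2 = 2 u (u - v) - (u - v) ^ 2` and `u (u - v) ≤ |u| |u - v| ≤ M |u - v|`
    have hmul : u * (u - v) ≤ |u| * |u - v| := (le_abs_self _).trans (abs_mul _ _).le
    nlinarith [mul_le_mul_of_nonneg_right hu (abs_nonneg (u - v)), sq_nonneg (u - v)]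
  · have htri : |u| ≤ |v| + |u - v| := by simpa using abs_add_le v (u - v)
    nlinarith [sq_nonneg (|v| - M), sq_abs v]

theorem huber_eq_clamp_sq_add (hM : 0 ≤ M) (u : ℝ) :
    huber M u = max (-M) (min u M) ^ 2 + 2 * M * |u - max (-M) (min u M)| := by
  unfold huber
  by_cases hu : |u| ≤ M
  · rw [if_pos hu]
    rw [abs_le] at hu
    simp [min_eq_left hu.2, max_eq_right hu.1]
  · rw [if_neg hu]
    rw [not_le] at hu
    rcases le_or_gt 0 u with hu0 | hu0
    · rw [abs_of_nonneg hu0] at hu ⊢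
      rw [min_eq_right hu.le, max_eq_right (by linarith), abs_of_nonneg (by linarith)]
      ring
    · rw [abs_of_neg hu0] at hu ⊢
      rw [min_eq_left (by linarith), max_eq_left (by linarith), abs_of_neg (by linarith)]
      ring

theorem isLeast_huber (hM : 0 ≤ M) (u : ℝ) :
    IsLeast (Set.range fun v => v ^ 2 + 2 * M * |u - v|) (huber M u) :=
  ⟨⟨_, (huber_eq_clamp_sq_add hM u).symm⟩, Set.forall_mem_range.2 (huber_le_sq_add hM u)⟩

theorem abs_sub_le_add_of_nonneg {r s : ℝ} (hr : 0 ≤ r) (hs : 0 ≤ s) : |r - s| ≤ r + s := by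
  simpa [abs_of_nonneg hr, abs_of_nonneg hs] using abs_sub r s

end

theorem stmt_16 (M : ℝ) (hM : 0 < M) (u : ℝ) :
    IsLeast
      {w : ℝ | ∃ v r s : ℝ, 0 ≤ r ∧ 0 ≤ s ∧ u = v + r - s ∧ w = v ^ 2 + 2 * M * (r + s)}
      (if |u| ≤ M then u ^ 2 else M * (2 * |u| - M)) := by
  change IsLeast _ (huber M u)
  constructor
  · obtain ⟨v, hv⟩ := (isLeast_huber hM.le u).1
    refine ⟨v, (u - v)⁺, (u - v)⁻, posPart_nonneg _, negPart_nonneg _, ?_, ?_⟩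
    · rw [add_sub_assoc, posPart_sub_negPart]
      ring
    · rw [posPart_add_negPart, ← hv]
  · rintro _ ⟨v, r, s, hr, hs, rfl, rfl⟩
    calc huber M (v + r - s) ≤ v ^ 2 + 2 * M * |v + r - s - v| :=
          (isLeast_huber hM.le _).2 ⟨v, rfl⟩
      _ ≤ v ^ 2 + 2 * M * (r + s) := by
          gcongr
          rw [show v + r - s - v = r - s by ring]
          exact abs_sub_le_add_of_nonneg hr hs
end
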